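/- Let Y ∈ ℝ^{N×T}, let Ω ⊆ {1,…,N}×{1,…,T}, let λ*, λ1 > 0, and suppose (X̂, Ô) is a global minimizer of the PCP objective f(X,O) = (1/2)‖P_Ω(Y−X−O)‖_F² + λ*‖X‖_* + λ1‖O‖₁ with rank(X̂) ≤ ρ. Then the infimum over P ∈ ℝ^{N×ρ}, Q ∈ ℝ^{T×ρ}, and O ∈ ℝ^{N×T} of the separable objective F(P,Q,O) = (1/2)‖P_Ω(Y − P Qᵀ − O)‖_F² + (λ*/2)(‖P‖_F² + ‖Q‖_F²) + λ1‖O‖₁ equals f(X̂, Ô), and it is attained at some (P̄, Q̄, Ō) with P̄ Q̄ᵀ = X̂ and Ō = Ô. -/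

import Mathlib

/-!
The nuclear norm is the least value of `(‖P‖_F² + ‖Q‖_F²) / 2` over factorizations `X = P Qᵀ`.
For the lower bound write the SVD `X = V Σ Uᵀ`: then `‖X‖_* = tr (Vᵀ P Qᵀ U)`, which by AM-GM is
at most `(‖Pᵀ V‖_F² + ‖Qᵀ U‖_F²) / 2 ≤ (‖P‖_F² + ‖Q‖_F²) / 2`, as `U` is orthogonal and `V` a
partial isometry. The bound is attained by `P = V Σ^{1/2}`, `Q = U Σ^{1/2}`, which only have
`rank X` nonzero columns and so fit into `ρ` columns. Hence `F(P, Q, O) ≥ f(P Qᵀ, O) ≥ f(X̂, Ô)`,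
with equality for the balanced factorization of `X̂`.
-/

open Matrix

lemma transpose_mul_self_isHermitian {N T : ℕ} (X : Matrix (Fin N) (Fin T) ℝ) :
    (Xᵀ * X).IsHermitian := by
  have := Matrix.isHermitian_conjTranspose_mul_self X
  simpa [Matrix.conjTranspose_eq_transpose_of_trivial] using this

/-- Nuclear norm: sum of singular values (square roots of eigenvalues of `XᵀX`). -/
noncomputable def nuclearNorm {N T : ℕ} (X : Matrix (Fin N) (Fin T) ℝ) : ℝ :=
  ∑ i, Real.sqrt ((transpose_mul_self_isHermitian X).eigenvalues i)

/-- Frobenius norm `‖X‖_F = √(trace (XᵀX))`. -/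
noncomputable def frobeniusNorm {N T : ℕ} (X : Matrix (Fin N) (Fin T) ℝ) : ℝ :=
  Real.sqrt (Matrix.trace (Xᵀ * X))

/-- Entrywise ℓ1-norm `‖X‖₁ = ∑_{n,t} |x_{nt}|`. -/
noncomputable def l1Norm {N T : ℕ} (X : Matrix (Fin N) (Fin T) ℝ) : ℝ :=
  ∑ n, ∑ t, |X n t|

/-- Sampling operator `P_Ω`: keeps entries indexed by `Ω` and zeroes out the rest. -/
def sampling {N T : ℕ} (Ω : Finset (Fin N × Fin T)) (X : Matrix (Fin N) (Fin T) ℝ) :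
    Matrix (Fin N) (Fin T) ℝ :=
  fun n t => if (n, t) ∈ Ω then X n t else 0

/-- The PCP objective `f(X,O) = (1/2)‖P_Ω(Y−X−O)‖_F² + λ*‖X‖_* + λ1‖O‖₁`. -/
noncomputable def pcpObjective {N T : ℕ} (Ω : Finset (Fin N × Fin T))
    (Y : Matrix (Fin N) (Fin T) ℝ) (lamStar lam1 : ℝ)
    (X O : Matrix (Fin N) (Fin T) ℝ) : ℝ :=
  (1 / 2) * frobeniusNorm (sampling Ω (Y - X - O)) ^ 2 +
    lamStar * nuclearNorm X + lam1 * l1Norm O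

/-- The separable objective
`F(P,Q,O) = (1/2)‖P_Ω(Y − P Qᵀ − O)‖_F² + (λ*/2)(‖P‖_F² + ‖Q‖_F²) + λ1‖O‖₁`. -/
noncomputable def separableObjective {N T ρ : ℕ} (Ω : Finset (Fin N × Fin T))
    (Y : Matrix (Fin N) (Fin T) ℝ) (lamStar lam1 : ℝ)
    (P : Matrix (Fin N) (Fin ρ) ℝ) (Q : Matrix (Fin T) (Fin ρ) ℝ)
    (O : Matrix (Fin N) (Fin T) ℝ) : ℝ :=
  (1 / 2) * frobeniusNorm (sampling Ω (Y - P * Qᵀ - O)) ^ 2 +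
    (lamStar / 2) * (frobeniusNorm P ^ 2 + frobeniusNorm Q ^ 2) + lam1 * l1Norm O

section FrobeniusTrace

variable {m n k : ℕ}

lemma trace_transpose_mul_self_nonneg (A : Matrix (Fin m) (Fin n) ℝ) : 0 ≤ trace (Aᵀ * A) := by
  simpa [conjTranspose_eq_transpose_of_trivial] using
    (posSemidef_conjTranspose_mul_self A).trace_nonneg

lemma frobeniusNorm_nonneg (A : Matrix (Fin m) (Fin n) ℝ) : 0 ≤ frobeniusNorm A :=
  Real.sqrt_nonneg _

lemma frobeniusNorm_sq (A : Matrix (Fin m) (Fin n) ℝ) : frobeniusNorm A ^ 2 = trace (Aᵀ * A) :=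
  Real.sq_sqrt (trace_transpose_mul_self_nonneg A)

lemma frobeniusNorm_transpose (A : Matrix (Fin m) (Fin n) ℝ) :
    frobeniusNorm Aᵀ = frobeniusNorm A := by
  rw [frobeniusNorm, frobeniusNorm, transpose_transpose, trace_mul_comm]

lemma trace_transpose_mul_le (A B : Matrix (Fin m) (Fin n) ℝ) :
    trace (Aᵀ * B) ≤ (frobeniusNorm A ^ 2 + frobeniusNorm B ^ 2) / 2 := by
  have h := trace_transpose_mul_self_nonneg (A - B)
  have hsymm : trace (Bᵀ * A) = trace (Aᵀ * B) := by
    rw [← trace_transpose, transpose_mul, transpose_transpose]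
  rw [transpose_sub, Matrix.sub_mul, Matrix.mul_sub, Matrix.mul_sub, trace_sub, trace_sub,
    trace_sub, hsymm] at h
  rw [frobeniusNorm_sq, frobeniusNorm_sq]
  linarith

lemma frobeniusNorm_mul_of_mul_mul_transpose_eq {A : Matrix (Fin m) (Fin n) ℝ}
    {M : Matrix (Fin n) (Fin k) ℝ} (h : A * (M * Mᵀ) = A) :
    frobeniusNorm (A * M) = frobeniusNorm A := by
  rw [frobeniusNorm, frobeniusNorm, transpose_mul, Matrix.mul_assoc, trace_mul_comm,
    Matrix.mul_assoc, Matrix.mul_assoc, h]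

lemma frobeniusNorm_mul_le_of_mul_transpose_mul_eq {V : Matrix (Fin n) (Fin k) ℝ}
    (hV : V * (Vᵀ * V) = V) (A : Matrix (Fin m) (Fin n) ℝ) :
    frobeniusNorm (A * V) ≤ frobeniusNorm A := by
  rw [← frobeniusNorm_transpose (A * V), ← frobeniusNorm_transpose A, transpose_mul]
  generalize Aᵀ = B
  have hproj : V * (Vᵀ * (V * (Vᵀ * B))) = V * (Vᵀ * B) := by
    rw [← Matrix.mul_assoc Vᵀ, ← Matrix.mul_assoc, hV]
  have hgram : (B - V * (Vᵀ * B))ᵀ * (B - V * (Vᵀ * B)) = Bᵀ * B - (Vᵀ * B)ᵀ * (Vᵀ * B) := by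
    simp only [transpose_sub, transpose_mul, transpose_transpose, Matrix.sub_mul, Matrix.mul_sub,
      Matrix.mul_assoc, hproj]
    abel
  have h := trace_transpose_mul_self_nonneg (B - V * (Vᵀ * B))
  rw [hgram, trace_sub] at h
  exact Real.sqrt_le_sqrt (by linarith)

lemma frobeniusNorm_sq_mul_diagonal {A : Matrix (Fin m) (Fin n) ℝ} {d : Fin n → ℝ}
    (hA : Aᵀ * A = diagonal d) (g : Fin n → ℝ) :
    frobeniusNorm (A * diagonal g) ^ 2 = ∑ i, d i * g i ^ 2 := by
  rw [frobeniusNorm_sq, transpose_mul, diagonal_transpose, Matrix.mul_assoc, ← Matrix.mul_assoc Aᵀ,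
    hA, diagonal_mul_diagonal, diagonal_mul_diagonal, trace_diagonal]
  exact Finset.sum_congr rfl fun i _ => by ring

end FrobeniusTrace

section SingularValueDecomposition

variable {N T : ℕ} (X : Matrix (Fin N) (Fin T) ℝ)

noncomputable def singularValues : Fin T → ℝ :=
  fun i => √((transpose_mul_self_isHermitian X).eigenvalues i)

noncomputable def rightSingularVectors : Matrix (Fin T) (Fin T) ℝ :=
  ((transpose_mul_self_isHermitian X).eigenvectorUnitary : Matrix (Fin T) (Fin T) ℝ)

/-- The columns `X uᵢ / σᵢ`; those with `σᵢ = 0` are zero, as `0⁻¹ = 0`. -/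
noncomputable def leftSingularVectors : Matrix (Fin N) (Fin T) ℝ :=
  X * rightSingularVectors X * diagonal fun i => (singularValues X i)⁻¹

lemma eigenvalues_transpose_mul_self_nonneg (i : Fin T) :
    0 ≤ (transpose_mul_self_isHermitian X).eigenvalues i := by
  have h := posSemidef_conjTranspose_mul_self X
  rw [conjTranspose_eq_transpose_of_trivial] at h
  exact h.eigenvalues_nonneg i

lemma nuclearNorm_eq_sum_singularValues : nuclearNorm X = ∑ i, singularValues X i := rfl

lemma rightSingularVectors_mul_transpose :
    rightSingularVectors X * (rightSingularVectors X)ᵀ = 1 := by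
  simpa [rightSingularVectors, star_eq_conjTranspose, conjTranspose_eq_transpose_of_trivial] using
    mem_unitaryGroup_iff.mp (transpose_mul_self_isHermitian X).eigenvectorUnitary.2

lemma transpose_mul_rightSingularVectors :
    (rightSingularVectors X)ᵀ * rightSingularVectors X = 1 := by
  simpa [rightSingularVectors, star_eq_conjTranspose, conjTranspose_eq_transpose_of_trivial] using
    mem_unitaryGroup_iff'.mp (transpose_mul_self_isHermitian X).eigenvectorUnitary.2

lemma gram_mul_rightSingularVectors :
    (X * rightSingularVectors X)ᵀ * (X * rightSingularVectors X) =
      diagonal fun i => singularValues X i ^ 2 := by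
  have h := (transpose_mul_self_isHermitian X).conjStarAlgAut_star_eigenvectorUnitary
  rw [Unitary.conjStarAlgAut_star_apply, star_eq_conjTranspose,
    conjTranspose_eq_transpose_of_trivial] at h
  simp only [singularValues, Real.sq_sqrt (eigenvalues_transpose_mul_self_nonneg X _)]
  rw [transpose_mul, Matrix.mul_assoc, ← Matrix.mul_assoc Xᵀ, ← Matrix.mul_assoc]
  exact h

lemma card_singularValues_ne_zero :
    (Finset.univ.filter fun i => singularValues X i ≠ 0).card = X.rank := by
  rw [← rank_transpose_mul_self, (transpose_mul_self_isHermitian X).rank_eq_card_non_zero_eigs,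
    Fintype.card_subtype]
  simp only [singularValues, ne_eq, Real.sqrt_eq_zero (eigenvalues_transpose_mul_self_nonneg X _)]

lemma mul_rightSingularVectors_apply_eq_zero {i : Fin T} (hi : singularValues X i = 0)
    (r : Fin N) : (X * rightSingularVectors X) r i = 0 := by
  have h := congrFun (congrFun (gram_mul_rightSingularVectors X) i) i
  rw [mul_apply] at h
  simp only [transpose_apply, diagonal_apply_eq, hi, ne_eq, OfNat.ofNat_ne_zero,
    not_false_eq_true, zero_pow] at h
  exact mul_self_eq_zero.mp <|
    (Finset.sum_eq_zero_iff_of_nonneg fun _ _ => mul_self_nonneg _).mp h r (Finset.mem_univ r)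

lemma transpose_leftSingularVectors_mul_self :
    (leftSingularVectors X)ᵀ * leftSingularVectors X =
      diagonal fun i => if singularValues X i = 0 then 0 else 1 := by
  rw [leftSingularVectors, transpose_mul, diagonal_transpose, Matrix.mul_assoc,
    ← Matrix.mul_assoc (X * rightSingularVectors X)ᵀ, gram_mul_rightSingularVectors,
    diagonal_mul_diagonal, diagonal_mul_diagonal]
  congr 1
  ext i
  split_ifs with hi
  · simp [hi]
  · field_simp

lemma leftSingularVectors_mul_transpose_mul_self :
    leftSingularVectors X * ((leftSingularVectors X)ᵀ * leftSingularVectors X) =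
      leftSingularVectors X := by
  rw [transpose_leftSingularVectors_mul_self, leftSingularVectors, Matrix.mul_assoc,
    diagonal_mul_diagonal]
  congr 2
  ext i
  split_ifs with hi <;> simp [hi]

lemma transpose_leftSingularVectors_mul_mul_rightSingularVectors :
    (leftSingularVectors X)ᵀ * X * rightSingularVectors X = diagonal (singularValues X) := by
  rw [Matrix.mul_assoc (leftSingularVectors X)ᵀ, leftSingularVectors, transpose_mul,
    diagonal_transpose, Matrix.mul_assoc, gram_mul_rightSingularVectors, diagonal_mul_diagonal]
  congr 1
  ext i
  rw [sq, ← mul_assoc, inv_mul_mul_self]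

lemma nuclearNorm_eq_trace :
    nuclearNorm X = trace ((leftSingularVectors X)ᵀ * X * rightSingularVectors X) := by
  rw [transpose_leftSingularVectors_mul_mul_rightSingularVectors, trace_diagonal,
    nuclearNorm_eq_sum_singularValues]

lemma leftSingularVectors_mul_diagonal_mul_transpose :
    leftSingularVectors X * diagonal (singularValues X) * (rightSingularVectors X)ᵀ = X := by
  have hsupp : X * rightSingularVectors X * diagonal (fun i => (singularValues X i)⁻¹ *
      singularValues X i) = X * rightSingularVectors X := by
    ext r i
    rw [mul_diagonal]
    by_cases hi : singularValues X i = 0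
    · rw [mul_rightSingularVectors_apply_eq_zero X hi, zero_mul]
    · rw [inv_mul_cancel₀ hi, mul_one]
  rw [leftSingularVectors, Matrix.mul_assoc (X * rightSingularVectors X), diagonal_mul_diagonal,
    hsupp, Matrix.mul_assoc, rightSingularVectors_mul_transpose, Matrix.mul_one]

end SingularValueDecomposition

lemma nuclearNorm_mul_transpose_le {N T ρ : ℕ} (P : Matrix (Fin N) (Fin ρ) ℝ)
    (Q : Matrix (Fin T) (Fin ρ) ℝ) :
    nuclearNorm (P * Qᵀ) ≤ (frobeniusNorm P ^ 2 + frobeniusNorm Q ^ 2) / 2 := by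
  set V := leftSingularVectors (P * Qᵀ)
  set U := rightSingularVectors (P * Qᵀ)
  have hV : frobeniusNorm (Pᵀ * V) ≤ frobeniusNorm P := by
    simpa only [frobeniusNorm_transpose] using
      frobeniusNorm_mul_le_of_mul_transpose_mul_eq
        (leftSingularVectors_mul_transpose_mul_self (P * Qᵀ)) Pᵀ
  have hU : frobeniusNorm (Qᵀ * U) = frobeniusNorm Q := by
    rw [frobeniusNorm_mul_of_mul_mul_transpose_eq (by
      rw [rightSingularVectors_mul_transpose, Matrix.mul_one]), frobeniusNorm_transpose]
  calc nuclearNorm (P * Qᵀ) = trace ((Pᵀ * V)ᵀ * (Qᵀ * U)) := by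
        rw [nuclearNorm_eq_trace, transpose_mul, transpose_transpose]
        simp only [V, U, Matrix.mul_assoc]
    _ ≤ (frobeniusNorm (Pᵀ * V) ^ 2 + frobeniusNorm (Qᵀ * U) ^ 2) / 2 :=
        trace_transpose_mul_le _ _
    _ ≤ (frobeniusNorm P ^ 2 + frobeniusNorm Q ^ 2) / 2 := by
        rw [hU]
        gcongr
        exact frobeniusNorm_nonneg _

lemma exists_mul_transpose_eq_diagonal_indicator {n k : ℕ} {s : Finset (Fin n)}
    (hs : s.card ≤ k) :
    ∃ M : Matrix (Fin n) (Fin k) ℝ, M * Mᵀ = diagonal fun i => if i ∈ s then 1 else 0 := by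
  obtain ⟨e⟩ : Nonempty (s ↪ Fin k) :=
    Function.Embedding.nonempty_of_card_le (by simpa using hs)
  refine ⟨of fun i j => if h : i ∈ s then if e ⟨i, h⟩ = j then 1 else 0 else 0, ?_⟩
  ext i i'
  simp only [mul_apply, transpose_apply, of_apply, diagonal_apply]
  obtain rfl | hii := eq_or_ne i i'
  · by_cases hi : i ∈ s <;> simp [hi]
  · by_cases hi : i ∈ s <;> by_cases hi' : i' ∈ s <;> simp [hi, hi', hii]

lemma exists_mul_transpose_eq_of_card_support_le {m p n k : ℕ} {A : Matrix (Fin m) (Fin n) ℝ}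
    {C : Matrix (Fin p) (Fin n) ℝ} {s : Finset (Fin n)} (hs : s.card ≤ k)
    (hA : ∀ r, ∀ i ∉ s, A r i = 0) (hC : ∀ r, ∀ i ∉ s, C r i = 0) :
    ∃ (A' : Matrix (Fin m) (Fin k) ℝ) (C' : Matrix (Fin p) (Fin k) ℝ),
      A' * C'ᵀ = A * Cᵀ ∧ frobeniusNorm A' = frobeniusNorm A ∧
        frobeniusNorm C' = frobeniusNorm C := by
  obtain ⟨M, hM⟩ := exists_mul_transpose_eq_diagonal_indicator hs
  have hsupp {q : ℕ} {B : Matrix (Fin q) (Fin n) ℝ} (hB : ∀ r, ∀ i ∉ s, B r i = 0) :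
      B * (M * Mᵀ) = B := by
    ext r i
    rw [hM, mul_diagonal]
    split_ifs with hi
    · rw [mul_one]
    · rw [hB r i hi, zero_mul]
  refine ⟨A * M, C * M, ?_, frobeniusNorm_mul_of_mul_mul_transpose_eq (hsupp hA),
    frobeniusNorm_mul_of_mul_mul_transpose_eq (hsupp hC)⟩
  rw [transpose_mul, Matrix.mul_assoc, ← Matrix.mul_assoc M, ← Matrix.mul_assoc, hsupp hA]

lemma exists_mul_transpose_eq_frobeniusNorm_sq_eq_nuclearNorm {N T ρ : ℕ}
    (X : Matrix (Fin N) (Fin T) ℝ) (hrank : X.rank ≤ ρ) :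
    ∃ (P : Matrix (Fin N) (Fin ρ) ℝ) (Q : Matrix (Fin T) (Fin ρ) ℝ),
      P * Qᵀ = X ∧ frobeniusNorm P ^ 2 = nuclearNorm X ∧ frobeniusNorm Q ^ 2 = nuclearNorm X := by
  set σ := singularValues X
  set s := Finset.univ.filter fun i => σ i ≠ 0
  set g : Fin T → ℝ := fun i => √(σ i)
  have hσ (i : Fin T) : 0 ≤ σ i := Real.sqrt_nonneg _
  have hcol {q : ℕ} (B : Matrix (Fin q) (Fin T) ℝ) : ∀ r, ∀ i ∉ s, (B * diagonal g) r i = 0 := by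
    intro r i hi
    simp only [s, Finset.mem_filter, Finset.mem_univ, true_and, not_not] at hi
    simp [g, hi]
  obtain ⟨P, Q, hPQ, hP, hQ⟩ := exists_mul_transpose_eq_of_card_support_le
    ((card_singularValues_ne_zero X).trans_le hrank) (hcol (leftSingularVectors X))
    (hcol (rightSingularVectors X))
  refine ⟨P, Q, ?_, ?_, ?_⟩
  · rw [hPQ, transpose_mul, diagonal_transpose, Matrix.mul_assoc, ← Matrix.mul_assoc (diagonal g),
      diagonal_mul_diagonal, ← Matrix.mul_assoc]
    have hgg : (fun i => g i * g i) = σ := funext fun i => Real.mul_self_sqrt (hσ i)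
    rw [hgg, leftSingularVectors_mul_diagonal_mul_transpose]
  · rw [hP, frobeniusNorm_sq_mul_diagonal (transpose_leftSingularVectors_mul_self X),
      nuclearNorm_eq_sum_singularValues]
    refine Finset.sum_congr rfl fun i _ => ?_
    split_ifs with hi
    · simp [hi]
    · rw [Real.sq_sqrt (hσ i), one_mul]
  · have hU : (rightSingularVectors X)ᵀ * rightSingularVectors X = diagonal fun _ => 1 := by
      rw [transpose_mul_rightSingularVectors, diagonal_one]
    rw [hQ, frobeniusNorm_sq_mul_diagonal hU, nuclearNorm_eq_sum_singularValues]
    exact Finset.sum_congr rfl fun i _ => by rw [one_mul, Real.sq_sqrt (hσ i)]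

section Objectives

variable {N T ρ : ℕ} (Ω : Finset (Fin N × Fin T)) (Y : Matrix (Fin N) (Fin T) ℝ)
  {lamStar : ℝ} (lam1 : ℝ) (P : Matrix (Fin N) (Fin ρ) ℝ) (Q : Matrix (Fin T) (Fin ρ) ℝ)
  (O : Matrix (Fin N) (Fin T) ℝ)

lemma pcpObjective_mul_transpose_le_separableObjective (hlamStar : 0 ≤ lamStar) :
    pcpObjective Ω Y lamStar lam1 (P * Qᵀ) O ≤ separableObjective Ω Y lamStar lam1 P Q O := by
  have h := mul_le_mul_of_nonneg_left (nuclearNorm_mul_transpose_le P Q) hlamStar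
  unfold pcpObjective separableObjective
  linarith

lemma separableObjective_eq_pcpObjective_mul_transpose
    (hP : frobeniusNorm P ^ 2 = nuclearNorm (P * Qᵀ))
    (hQ : frobeniusNorm Q ^ 2 = nuclearNorm (P * Qᵀ)) :
    separableObjective Ω Y lamStar lam1 P Q O = pcpObjective Ω Y lamStar lam1 (P * Qᵀ) O := by
  unfold pcpObjective separableObjective
  rw [hP, hQ]
  ring

end Objectives

theorem separable_infimum_eq_pcp_min_general {N T ρ : ℕ} (Ω : Finset (Fin N × Fin T))
    (Y : Matrix (Fin N) (Fin T) ℝ) (lamStar lam1 : ℝ)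
    (hlamStar : 0 < lamStar)
    (Xhat Ohat : Matrix (Fin N) (Fin T) ℝ)
    (hmin : ∀ X O : Matrix (Fin N) (Fin T) ℝ,
      pcpObjective Ω Y lamStar lam1 Xhat Ohat ≤ pcpObjective Ω Y lamStar lam1 X O)
    (hrank : Xhat.rank ≤ ρ) :
    (∀ (P : Matrix (Fin N) (Fin ρ) ℝ) (Q : Matrix (Fin T) (Fin ρ) ℝ)
        (O : Matrix (Fin N) (Fin T) ℝ),
      pcpObjective Ω Y lamStar lam1 Xhat Ohat ≤ separableObjective Ω Y lamStar lam1 P Q O) ∧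
    (∃ (P : Matrix (Fin N) (Fin ρ) ℝ) (Q : Matrix (Fin T) (Fin ρ) ℝ)
        (O : Matrix (Fin N) (Fin T) ℝ),
      P * Qᵀ = Xhat ∧ O = Ohat ∧
      separableObjective Ω Y lamStar lam1 P Q O = pcpObjective Ω Y lamStar lam1 Xhat Ohat) := by
  refine ⟨fun P Q O => (hmin (P * Qᵀ) O).trans
    (pcpObjective_mul_transpose_le_separableObjective Ω Y lam1 P Q O hlamStar.le), ?_⟩
  obtain ⟨P, Q, hPQ, hP, hQ⟩ := exists_mul_transpose_eq_frobeniusNorm_sq_eq_nuclearNorm Xhat hrank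
  subst hPQ
  exact ⟨P, Q, Ohat, rfl, rfl,
    separableObjective_eq_pcpObjective_mul_transpose Ω Y lam1 P Q Ohat hP hQ⟩

/-- if `(X̂, Ô)` globally minimizes the PCP objective and `rank X̂ ≤ ρ`, then the
infimum of the separable objective over `P, Q, O` equals `f(X̂, Ô)` and is attained at some
`(P̄, Q̄, Ō)` with `P̄ Q̄ᵀ = X̂` and `Ō = Ô`. -/
theorem separable_infimum_eq_pcp_min {N T ρ : ℕ} (Ω : Finset (Fin N × Fin T))
    (Y : Matrix (Fin N) (Fin T) ℝ) (lamStar lam1 : ℝ)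
    (hlamStar : 0 < lamStar) (hlam1 : 0 < lam1)
    (Xhat Ohat : Matrix (Fin N) (Fin T) ℝ)
    (hmin : ∀ X O : Matrix (Fin N) (Fin T) ℝ,
      pcpObjective Ω Y lamStar lam1 Xhat Ohat ≤ pcpObjective Ω Y lamStar lam1 X O)
    (hrank : Xhat.rank ≤ ρ) :
    (∀ (P : Matrix (Fin N) (Fin ρ) ℝ) (Q : Matrix (Fin T) (Fin ρ) ℝ)
        (O : Matrix (Fin N) (Fin T) ℝ),
      pcpObjective Ω Y lamStar lam1 Xhat Ohat ≤ separableObjective Ω Y lamStar lam1 P Q O) ∧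
    (∃ (P : Matrix (Fin N) (Fin ρ) ℝ) (Q : Matrix (Fin T) (Fin ρ) ℝ)
        (O : Matrix (Fin N) (Fin T) ℝ),
      P * Qᵀ = Xhat ∧ O = Ohat ∧
      separableObjective Ω Y lamStar lam1 P Q O = pcpObjective Ω Y lamStar lam1 Xhat Ohat) :=
  separable_infimum_eq_pcp_min_general Ω Y lamStar lam1 hlamStar Xhat Ohat hmin hrank
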